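/- Suppose E, A, D₁, P : (0, r₀] → [0, ∞) satisfy, for all 0 < r ≤ ρ/4, the decay estimate D₁(r) ≤ C[(ρ/r) E(ρ)^{1/λ} A(ρ)^{1−1/λ} + (r/ρ)(E(ρ)^{1/2} + P(ρ))] with 1 < λ < 2, and the smallness bounds E(ρ) ≤ ε ρ^{2/3−γ}, A(ρ) ≤ ε ρ^{1/6−γ}, P(ρ) ≤ ε^{4/5} ρ^{1/3−4γ/5} hold for all ρ ≤ r₀. If γ ≤ min{5(3λ−1)/(18λ), 5(1+λ)/(12λ), 5(1+λ)/(18λ)} and θ = ρ^β with β = 1/(4λ) − 1/12 − γ/10 ∈ (0, 1), then E(θρ) + D₁(θρ) ≤ C' ε^{1/2} for all sufficiently small ρ > 0, with C' depending only on C and λ. -/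

import Mathlib

/-!
Put `θ = ρ^β`. The bounds on `E(ρ)` and `A(ρ)` interpolate to `E(ρ)^{1/λ} A(ρ)^{1-1/λ} ≤ ε ρ^μ`
with `μ = (2/3 - γ)/λ + (1/6 - γ)(1 - 1/λ)`, and the choice of `β` makes the two competing terms
of the decay estimate scale alike: `μ - β = β + 1/3 - 4γ/5 = 1/4 + 1/(4λ) - 9γ/10`, which is
nonnegative exactly when `γ ≤ 5(1+λ)/(18λ)`. Hence, for `ρ ≤ 1`, every term of the decay
estimate at `r = θρ` is a power `ε^q ρ^s` with `q ≥ 1/2` and `s ≥ 0`, i.e. at most `ε^{1/2}`;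
`θ ≤ 1/4` only requires `ρ ≤ 4^{-1/β}`.
-/

open Real

lemma rpow_mul_rpow_le_mul_rpow {x y ε ρ a b p : ℝ} (hx : 0 ≤ x) (hy : 0 ≤ y) (hε : 0 ≤ ε)
    (hρ : 0 < ρ) (hxa : x ≤ ε * ρ ^ a) (hyb : y ≤ ε * ρ ^ b) (hp0 : 0 ≤ p) (hp1 : p ≤ 1) :
    x ^ p * y ^ (1 - p) ≤ ε * ρ ^ (a * p + b * (1 - p)) := by
  calc x ^ p * y ^ (1 - p) ≤ (ε * ρ ^ a) ^ p * (ε * ρ ^ b) ^ (1 - p) := by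
        gcongr
    _ = ε ^ (p + (1 - p)) * ρ ^ (a * p + b * (1 - p)) := by
        rw [mul_rpow hε (by positivity), mul_rpow hε (by positivity), ← rpow_mul hρ.le,
          ← rpow_mul hρ.le, rpow_add' hε (by norm_num), rpow_add hρ]
        ring
    _ = ε * ρ ^ (a * p + b * (1 - p)) := by norm_num

lemma le_of_le_mul_rpow {x ε ρ s : ℝ} (hε : 0 ≤ ε) (hρ0 : 0 ≤ ρ) (hρ1 : ρ ≤ 1) (hs : 0 ≤ s)
    (h : x ≤ ε * ρ ^ s) : x ≤ ε :=
  h.trans (mul_le_of_le_one_right hε (rpow_le_one hρ0 hρ1 hs))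

section Exponents

variable {lam γ β : ℝ}

lemma energy_exponent_nonneg (hlam : 1 < lam) (hγ : γ ≤ 5 * (1 + lam) / (18 * lam)) :
    0 ≤ 2 / 3 - γ := by
  rw [le_div_iff₀ (by positivity)] at hγ
  nlinarith

lemma interpolation_exponent_sub_eq (hlam : lam ≠ 0) (hβ : β = 1 / (4 * lam) - 1 / 12 - γ / 10) :
    -β + ((2 / 3 - γ) * (1 / lam) + (1 / 6 - γ) * (1 - 1 / lam)) = β + (1 / 3 - 4 * γ / 5) := by
  subst hβ
  field_simp
  ring

lemma pressure_exponent_nonneg (hlam : 0 < lam) (hβ : β = 1 / (4 * lam) - 1 / 12 - γ / 10)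
    (hγ : γ ≤ 5 * (1 + lam) / (18 * lam)) : 0 ≤ β + (1 / 3 - 4 * γ / 5) := by
  have hκ : β + (1 / 3 - 4 * γ / 5) = (5 * (1 + lam) / (18 * lam) - γ) * (9 / 10) := by
    subst hβ
    field_simp
    ring
  rw [hκ]
  exact mul_nonneg (sub_nonneg.2 hγ) (by norm_num)

end Exponents

lemma decay_bracket_le {lam γ β ε ρ e a p : ℝ} (hlam : 1 < lam) (hε : 0 < ε) (hε1 : ε ≤ 1)
    (hρ : 0 < ρ) (hρ1 : ρ ≤ 1) (hβ : β = 1 / (4 * lam) - 1 / 12 - γ / 10) (hβ0 : 0 ≤ β)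
    (hγ : γ ≤ 5 * (1 + lam) / (18 * lam)) (he0 : 0 ≤ e) (ha0 : 0 ≤ a)
    (he : e ≤ ε * ρ ^ (2 / 3 - γ)) (ha : a ≤ ε * ρ ^ (1 / 6 - γ))
    (hp : p ≤ ε ^ ((4 : ℝ) / 5) * ρ ^ (1 / 3 - 4 * γ / 5)) :
    (ρ ^ β)⁻¹ * e ^ (1 / lam) * a ^ (1 - 1 / lam) + ρ ^ β * (e ^ ((1 : ℝ) / 2) + p)
      ≤ 3 * ε ^ ((1 : ℝ) / 2) := by
  have hlam0 : 0 < lam := by linarith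
  have hκ := pressure_exponent_nonneg hlam0 hβ hγ
  have hinterp : (ρ ^ β)⁻¹ * e ^ (1 / lam) * a ^ (1 - 1 / lam) ≤ ε ^ ((1 : ℝ) / 2) := by
    have h := rpow_mul_rpow_le_mul_rpow he0 ha0 hε.le hρ he ha (by positivity)
      ((div_le_one hlam0).2 hlam.le)
    have h' : (ρ ^ β)⁻¹ * e ^ (1 / lam) * a ^ (1 - 1 / lam)
        ≤ ε * ρ ^ (β + (1 / 3 - 4 * γ / 5)) := by
      rw [mul_assoc, ← interpolation_exponent_sub_eq hlam0.ne' hβ, rpow_add hρ, rpow_neg hρ.le]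
      calc (ρ ^ β)⁻¹ * (e ^ (1 / lam) * a ^ (1 - 1 / lam))
          ≤ (ρ ^ β)⁻¹ * (ε * ρ ^ ((2 / 3 - γ) * (1 / lam) + (1 / 6 - γ) * (1 - 1 / lam))) :=
            mul_le_mul_of_nonneg_left h (by positivity)
        _ = _ := by ring
    exact (le_of_le_mul_rpow hε.le hρ.le hρ1 hκ h').trans
      (self_le_rpow_of_le_one hε.le hε1 (by norm_num))
  have henergy : ρ ^ β * e ^ ((1 : ℝ) / 2) ≤ ε ^ ((1 : ℝ) / 2) := by
    have he_le : e ≤ ε :=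
      le_of_le_mul_rpow hε.le hρ.le hρ1 (energy_exponent_nonneg hlam hγ) he
    calc ρ ^ β * e ^ ((1 : ℝ) / 2) ≤ 1 * ε ^ ((1 : ℝ) / 2) := by
          gcongr
          exact rpow_le_one hρ.le hρ1 hβ0
      _ = ε ^ ((1 : ℝ) / 2) := one_mul _
  have hpressure : ρ ^ β * p ≤ ε ^ ((1 : ℝ) / 2) := by
    have h : ρ ^ β * p ≤ ε ^ ((4 : ℝ) / 5) * ρ ^ (β + (1 / 3 - 4 * γ / 5)) := by
      rw [rpow_add hρ]
      calc ρ ^ β * p ≤ ρ ^ β * (ε ^ ((4 : ℝ) / 5) * ρ ^ (1 / 3 - 4 * γ / 5)) := by gcongr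
        _ = _ := by ring
    exact (le_of_le_mul_rpow (by positivity) hρ.le hρ1 hκ h).trans
      (rpow_le_rpow_of_exponent_ge hε hε1 (by norm_num))
  linarith

theorem stmt_17_general (C lam : ℝ) (hC : 0 < C) (hlam1 : 1 < lam) :
    ∃ C' : ℝ, 0 < C' ∧
      ∀ (E A D₁ P : ℝ → ℝ) (ε γ r₀ β : ℝ),
        0 < ε → ε ≤ 1 → 0 < γ → 0 < r₀ →
        β = 1 / (4 * lam) - 1 / 12 - γ / 10 → 0 < β → β < 1 →
        γ ≤ min (min (5 * (3 * lam - 1) / (18 * lam)) (5 * (1 + lam) / (12 * lam)))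
            (5 * (1 + lam) / (18 * lam)) →
        (∀ r : ℝ, 0 ≤ E r ∧ 0 ≤ A r ∧ 0 ≤ D₁ r ∧ 0 ≤ P r) →
        (∀ r ρ : ℝ, 0 < r → r ≤ ρ / 4 → ρ ≤ r₀ →
          D₁ r ≤ C * ((ρ / r) * (E ρ) ^ (1 / lam) * (A ρ) ^ (1 - 1 / lam) +
            (r / ρ) * ((E ρ) ^ ((1 : ℝ) / 2) + P ρ))) →
        (∀ ρ : ℝ, 0 < ρ → ρ ≤ r₀ → E ρ ≤ ε * ρ ^ (2 / 3 - γ)) →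
        (∀ ρ : ℝ, 0 < ρ → ρ ≤ r₀ → A ρ ≤ ε * ρ ^ (1 / 6 - γ)) →
        (∀ ρ : ℝ, 0 < ρ → ρ ≤ r₀ → P ρ ≤ ε ^ ((4 : ℝ) / 5) * ρ ^ (1 / 3 - 4 * γ / 5)) →
        ∃ ρ₁ : ℝ, 0 < ρ₁ ∧ ∀ ρ : ℝ, 0 < ρ → ρ ≤ ρ₁ →
          E (ρ ^ β * ρ) + D₁ (ρ ^ β * ρ) ≤ C' * ε ^ ((1 : ℝ) / 2) := by
  refine ⟨1 + 3 * C, by positivity, ?_⟩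
  intro E A D₁ P ε γ r₀ β hε hε1 _ _ hβ hβ0 _ hγmin hnn hdecay hE hA hP
  have hγ : γ ≤ 5 * (1 + lam) / (18 * lam) := hγmin.trans (min_le_right _ _)
  refine ⟨min r₀ (min 1 ((4 : ℝ)⁻¹ ^ β⁻¹)), by positivity, fun ρ hρ hρ₁ ↦ ?_⟩
  have hρr₀ : ρ ≤ r₀ := hρ₁.trans (min_le_left _ _)
  have hρ1 : ρ ≤ 1 := hρ₁.trans ((min_le_right _ _).trans (min_le_left _ _))
  have hθ : ρ ^ β ≤ 4⁻¹ := (le_rpow_inv_iff_of_pos hρ.le (by norm_num) hβ0).1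
    (hρ₁.trans ((min_le_right _ _).trans (min_le_right _ _)))
  have ht : 0 < ρ ^ β * ρ := by positivity
  have ht4 : ρ ^ β * ρ ≤ ρ / 4 := by nlinarith
  have hEt : E (ρ ^ β * ρ) ≤ ε ^ ((1 : ℝ) / 2) :=
    (le_of_le_mul_rpow hε.le ht.le (by linarith) (energy_exponent_nonneg hlam1 hγ)
      (hE _ ht (by linarith))).trans (self_le_rpow_of_le_one hε.le hε1 (by norm_num))
  have hDt : D₁ (ρ ^ β * ρ) ≤ C * (3 * ε ^ ((1 : ℝ) / 2)) := by
    have h := hdecay _ ρ ht ht4 hρr₀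
    rw [show ρ / (ρ ^ β * ρ) = (ρ ^ β)⁻¹ by field_simp,
      show ρ ^ β * ρ / ρ = ρ ^ β by field_simp] at h
    exact h.trans (mul_le_mul_of_nonneg_left (decay_bracket_le hlam1 hε hε1 hρ hρ1 hβ hβ0.le hγ
      (hnn ρ).1 (hnn ρ).2.1 (hE ρ hρ hρr₀) (hA ρ hρ hρr₀) (hP ρ hρ hρr₀)) hC.le)
  linarith

/-- Abstract concluding estimate of Proposition 2 (boundary box dimension ≤ 10/9):
from the decay estimate `D₁(r) ≤ C[(ρ/r)E(ρ)^{1/λ}A(ρ)^{1−1/λ} + (r/ρ)(E(ρ)^{1/2} + P(ρ))]`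
and the smallness bounds, with `γ ≤ min{5(3λ−1)/(18λ), 5(1+λ)/(12λ), 5(1+λ)/(18λ)}` and
`θ = ρ^β`, `β = 1/(4λ) − 1/12 − γ/10 ∈ (0,1)`, it follows that
`E(θρ) + D₁(θρ) ≤ C' ε^{1/2}` for all sufficiently small `ρ`, with `C' = C'(C, λ)`. -/
theorem stmt_17 (C lam : ℝ) (hC : 0 < C) (hlam1 : 1 < lam) (hlam2 : lam < 2) :
    ∃ C' : ℝ, 0 < C' ∧
      ∀ (E A D₁ P : ℝ → ℝ) (ε γ r₀ β : ℝ),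
        0 < ε → ε ≤ 1 → 0 < γ → 0 < r₀ →
        β = 1 / (4 * lam) - 1 / 12 - γ / 10 → 0 < β → β < 1 →
        γ ≤ min (min (5 * (3 * lam - 1) / (18 * lam)) (5 * (1 + lam) / (12 * lam)))
            (5 * (1 + lam) / (18 * lam)) →
        (∀ r : ℝ, 0 ≤ E r ∧ 0 ≤ A r ∧ 0 ≤ D₁ r ∧ 0 ≤ P r) →
        (∀ r ρ : ℝ, 0 < r → r ≤ ρ / 4 → ρ ≤ r₀ →
          D₁ r ≤ C * ((ρ / r) * (E ρ) ^ (1 / lam) * (A ρ) ^ (1 - 1 / lam) +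
            (r / ρ) * ((E ρ) ^ ((1 : ℝ) / 2) + P ρ))) →
        (∀ ρ : ℝ, 0 < ρ → ρ ≤ r₀ → E ρ ≤ ε * ρ ^ (2 / 3 - γ)) →
        (∀ ρ : ℝ, 0 < ρ → ρ ≤ r₀ → A ρ ≤ ε * ρ ^ (1 / 6 - γ)) →
        (∀ ρ : ℝ, 0 < ρ → ρ ≤ r₀ → P ρ ≤ ε ^ ((4 : ℝ) / 5) * ρ ^ (1 / 3 - 4 * γ / 5)) →
        ∃ ρ₁ : ℝ, 0 < ρ₁ ∧ ∀ ρ : ℝ, 0 < ρ → ρ ≤ ρ₁ →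
          E (ρ ^ β * ρ) + D₁ (ρ ^ β * ρ) ≤ C' * ε ^ ((1 : ℝ) / 2) :=
  stmt_17_general C lam hC hlam1
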